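/- arXiv:1602.07568 — 3 statements merged into one kernel-verified Lean document; each statement's English description precedes it below -/
import Mathlib

section
/- Let A be an n×n complex matrix with n ≥ 2. Every eigenvalue λ of A satisfies the Brauer ovals-of-Cassini condition: there exist indices i ≠ j such that (|λ - A i i| - r_i^j(A)) · |λ - A j j| ≤ |A i j| · r_j(A), where r_i^j(A) = r_i(A) - |A i j| and r_i(A) = ∑_{k ≠ i} |A i k|. -/
/-!
Take an eigenvector `x` and an index `i` where `‖x i‖` is maximal, and any `j ≠ i`. Row `i` of
`A x = λ x`, with every `‖x k‖` for `k ≠ j` bounded by `‖x i‖`, gives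
`(‖λ - A i i‖ - r_i^j) ‖x i‖ ≤ ‖A i j‖ ‖x j‖`, while row `j` gives `‖λ - A j j‖ ‖x j‖ ≤ r_j ‖x i‖`.
Multiplying the two and cancelling `‖x i‖ > 0` yields the oval-of-Cassini inequality.
-/

open Finset

theorem Finset.sum_mul_le_sum_sub_mul_add {ι : Type*} [DecidableEq ι] {s : Finset ι}
    {w v : ι → ℝ} {M : ℝ} (hw : ∀ k ∈ s, 0 ≤ w k) (hv : ∀ k ∈ s, v k ≤ M) {j : ι}
    (hj : j ∈ s) :
    ∑ k ∈ s, w k * v k ≤ (∑ k ∈ s, w k - w j) * M + w j * v j := by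
  rw [← add_sum_erase s _ hj, ← add_sum_erase s w hj, add_sub_cancel_left, sum_mul]
  have hrest : ∑ k ∈ s.erase j, w k * v k ≤ ∑ k ∈ s.erase j, w k * M :=
    sum_le_sum fun k hk =>
      mul_le_mul_of_nonneg_left (hv k (mem_of_mem_erase hk)) (hw k (mem_of_mem_erase hk))
  linarith

theorem mul_le_mul_of_cross_bounds {a c d r t M : ℝ} (hM : 0 < M) (hc : 0 ≤ c) (hd : 0 ≤ d)
    (hi : a * M ≤ c * t) (hj : d * t ≤ r * M) :
    a * d ≤ c * r := by
  refine le_of_mul_le_mul_right ?_ hM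
  calc a * d * M = a * M * d := by ring
    _ ≤ c * t * d := mul_le_mul_of_nonneg_right hi hd
    _ = c * (d * t) := by ring
    _ ≤ c * (r * M) := mul_le_mul_of_nonneg_left hj hc
    _ = c * r * M := by ring

namespace Matrix

variable {ι K : Type*} [Fintype ι] [DecidableEq ι] [NormedDivisionRing K]

theorem norm_sub_diag_mul_le_of_mulVec_eq_smul {A : Matrix ι ι K} {μ : K} {x : ι → K}
    (h : A *ᵥ x = μ • x) (p : ι) :
    ‖μ - A p p‖ * ‖x p‖ ≤ ∑ k ∈ univ.erase p, ‖A p k‖ * ‖x k‖ := by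
  have hrow : (μ - A p p) * x p = ∑ k ∈ univ.erase p, A p k * x k := by
    have hp : ∑ k, A p k * x k = μ * x p := congrFun h p
    rw [← add_sum_erase _ _ (mem_univ p)] at hp
    rw [sub_mul, ← hp, add_sub_cancel_left]
  calc ‖μ - A p p‖ * ‖x p‖ = ‖∑ k ∈ univ.erase p, A p k * x k‖ := by rw [← hrow, norm_mul]
    _ ≤ ∑ k ∈ univ.erase p, ‖A p k * x k‖ := norm_sum_le _ _
    _ = ∑ k ∈ univ.erase p, ‖A p k‖ * ‖x k‖ := by simp only [norm_mul]

/-- Brauer's ovals of Cassini theorem. -/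
theorem exists_ne_cassini_of_mulVec_eq_smul [Nontrivial ι] {A : Matrix ι ι K} {μ : K}
    {x : ι → K} (hx : x ≠ 0) (h : A *ᵥ x = μ • x) :
    ∃ i j, i ≠ j ∧
      (‖μ - A i i‖ - ((∑ k ∈ univ.erase i, ‖A i k‖) - ‖A i j‖)) * ‖μ - A j j‖ ≤
        ‖A i j‖ * ∑ k ∈ univ.erase j, ‖A j k‖ := by
  obtain ⟨i, -, hmax⟩ := exists_max_image univ (fun k => ‖x k‖) univ_nonempty
  have hle : ∀ k, ‖x k‖ ≤ ‖x i‖ := fun k => hmax k (mem_univ k)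
  have hpos : 0 < ‖x i‖ := by
    obtain ⟨k, hk⟩ := Function.ne_iff.mp hx
    exact (norm_pos_iff.mpr hk).trans_le (hle k)
  obtain ⟨j, hji⟩ := exists_ne i
  have hrow_i : (‖μ - A i i‖ - ((∑ k ∈ univ.erase i, ‖A i k‖) - ‖A i j‖)) * ‖x i‖ ≤
      ‖A i j‖ * ‖x j‖ := by
    have := (norm_sub_diag_mul_le_of_mulVec_eq_smul h i).trans
      (sum_mul_le_sum_sub_mul_add (w := fun k => ‖A i k‖) (fun _ _ => norm_nonneg _)
        (fun k _ => hle k) (mem_erase.mpr ⟨hji, mem_univ j⟩))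
    linarith
  have hrow_j : ‖μ - A j j‖ * ‖x j‖ ≤ (∑ k ∈ univ.erase j, ‖A j k‖) * ‖x i‖ :=
    calc ‖μ - A j j‖ * ‖x j‖ ≤ ∑ k ∈ univ.erase j, ‖A j k‖ * ‖x k‖ :=
          norm_sub_diag_mul_le_of_mulVec_eq_smul h j
      _ ≤ ∑ k ∈ univ.erase j, ‖A j k‖ * ‖x i‖ :=
          sum_le_sum fun k _ => mul_le_mul_of_nonneg_left (hle k) (norm_nonneg _)
      _ = (∑ k ∈ univ.erase j, ‖A j k‖) * ‖x i‖ := (sum_mul _ _ _).symm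
  exact ⟨i, j, hji.symm,
    mul_le_mul_of_cross_bounds hpos (norm_nonneg _) (norm_nonneg _) hrow_i hrow_j⟩

end Matrix

theorem stmt_3 {n : ℕ} (hn : 2 ≤ n) (A : Matrix (Fin n) (Fin n) ℂ) (lam : ℂ)
    (x : Fin n → ℂ) (hx : x ≠ 0) (heig : A.mulVec x = lam • x) :
    ∃ i j : Fin n, i ≠ j ∧
      (‖lam - A i i‖ -
          ((∑ k ∈ Finset.univ.erase i, ‖A i k‖) - ‖A i j‖)) *
        ‖lam - A j j‖ ≤
      ‖A i j‖ * ∑ k ∈ Finset.univ.erase j, ‖A j k‖ := by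
  have : Nontrivial (Fin n) := Fin.nontrivial_iff_two_le.mpr hn
  exact Matrix.exists_ne_cassini_of_mulVec_eq_smul hx heig
end

section
/- Let A be an n×n complex matrix, n ≥ 2, and let S be a nonempty proper subset of the index set N = {1,...,n}, with complement S̄. Decompose each off-diagonal row sum as r_i(A) = r_i^S(A) + r_i^{S̄}(A), where r_i^T(A) = ∑_{j ∈ T, j ≠ i} |A i j|. Then every eigenvalue λ of A lies in the union, over i ∈ S, of the sets {z : |z - A i i| ≤ r_i^S(A)}, together with the union over i ∈ S, j ∈ S̄ of the sets {z : (|z - A i i| - r_i^S(A))(|z - A j j| - r_j^{S̄}(A)) ≤ r_i^{S̄}(A) r_j^S(A)} ∩ {z : |z - A i i| ≤ r_i(A)}, together with the symmetric sets obtained by swapping the roles of S and S̄. -/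
/-!
Take an eigenvector `x`, a coordinate `p` where `|x|` is maximal, say `p ∈ S`, and a coordinate
`q` where `|x|` is maximal on `S̄`. Row `p` of `A x = λ x` gives
`(|λ - a_pp| - r_p^S) |x_p| ≤ r_p^{S̄} |x_q|` and row `q` gives
`(|λ - a_qq| - r_q^{S̄}) |x_q| ≤ r_q^S |x_p|`. Either the first factor is nonpositive, or `x_q ≠ 0`
and multiplying the two inequalities yields the Brauer-type product inequality.
-/

/-- `r_i^T(A) = ∑_{j ∈ T, j ≠ i} |A i j|`. -/
noncomputable def rT {n : ℕ} (A : Matrix (Fin n) (Fin n) ℂ) (T : Finset (Fin n))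
    (i : Fin n) : ℝ :=
  ∑ j ∈ T.erase i, ‖A i j‖

open Finset

lemma rT_nonneg {n : ℕ} (A : Matrix (Fin n) (Fin n) ℂ) (T : Finset (Fin n)) (i : Fin n) :
    0 ≤ rT A T i :=
  sum_nonneg fun _ _ => norm_nonneg _

lemma le_or_sub_mul_sub_le_mul_and_le_add {a b r r' s s' X Y : ℝ} (hs : 0 ≤ s) (hs' : 0 ≤ s')
    (hYX : Y ≤ X) (hX : 0 < X) (ha : a * X ≤ r * X + s * Y) (hb : b * Y ≤ r' * Y + s' * X) :
    a ≤ r ∨ ((a - r) * (b - r') ≤ s * s' ∧ a ≤ r + s) := by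
  rcases le_or_gt a r with har | har
  · exact Or.inl har
  have hY : 0 < Y := by nlinarith
  refine Or.inr ⟨?_, by nlinarith⟩
  rcases le_or_gt b r' with hbr | hbr
  · nlinarith [mul_nonneg hs hs']
  have hprod : (a - r) * X * ((b - r') * Y) ≤ s * Y * (s' * X) :=
    mul_le_mul (by linarith) (by linarith) (by positivity) (by positivity)
  have hXY : 0 < X * Y := mul_pos hX hY
  nlinarith

theorem sub_diag_mul_eq_sum_erase_of_mulVec_eq_smul {R ι : Type*} [CommRing R] [Fintype ι]
    [DecidableEq ι] {A : Matrix ι ι R} {lam : R} {x : ι → R} (heig : A.mulVec x = lam • x) (i : ι) :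
    (lam - A i i) * x i = ∑ j ∈ univ.erase i, A i j * x j := by
  have hrow : ∑ j, A i j * x j = lam * x i := by
    simpa [Matrix.mulVec, dotProduct] using congrFun heig i
  rw [sum_erase_eq_sub (mem_univ i), hrow]
  ring

section RowBounds

variable {n : ℕ} {A : Matrix (Fin n) (Fin n) ℂ} {x : Fin n → ℂ}

lemma sum_erase_norm_mul_le_rT_mul {T : Finset (Fin n)} (i : Fin n) {M : ℝ}
    (hM : ∀ j ∈ T, ‖x j‖ ≤ M) :
    ∑ j ∈ T.erase i, ‖A i j‖ * ‖x j‖ ≤ rT A T i * M := by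
  rw [rT, sum_mul]
  exact sum_le_sum fun j hj =>
    mul_le_mul_of_nonneg_left (hM j (mem_of_mem_erase hj)) (norm_nonneg _)

lemma norm_sub_diag_mul_le_rT {lam : ℂ} (heig : A.mulVec x = lam • x) (T : Finset (Fin n))
    (i : Fin n) {M M' : ℝ} (hM : ∀ j ∈ T, ‖x j‖ ≤ M) (hM' : ∀ j ∈ Tᶜ, ‖x j‖ ≤ M') :
    ‖lam - A i i‖ * ‖x i‖ ≤ rT A T i * M + rT A Tᶜ i * M' := by
  have hsplit : univ.erase i = T.erase i ∪ Tᶜ.erase i := by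
    rw [← erase_union_distrib, union_compl]
  have hdisj : Disjoint (T.erase i) (Tᶜ.erase i) :=
    disjoint_compl_right.mono (erase_subset _ _) (erase_subset _ _)
  calc ‖lam - A i i‖ * ‖x i‖ = ‖∑ j ∈ univ.erase i, A i j * x j‖ := by
        rw [← norm_mul, sub_diag_mul_eq_sum_erase_of_mulVec_eq_smul heig]
    _ ≤ ∑ j ∈ univ.erase i, ‖A i j‖ * ‖x j‖ := by
        simpa only [norm_mul] using norm_sum_le (univ.erase i) fun j => A i j * x j
    _ = ∑ j ∈ T.erase i, ‖A i j‖ * ‖x j‖ + ∑ j ∈ Tᶜ.erase i, ‖A i j‖ * ‖x j‖ := by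
        rw [hsplit, sum_union hdisj]
    _ ≤ rT A T i * M + rT A Tᶜ i * M' :=
        add_le_add (sum_erase_norm_mul_le_rT_mul i hM) (sum_erase_norm_mul_le_rT_mul i hM')

lemma brauer_S_type_of_maximal_coords {lam : ℂ} (heig : A.mulVec x = lam • x) (S : Finset (Fin n))
    {p q : Fin n} (hp : p ∈ S) (hq : q ∈ Sᶜ) (hpmax : ∀ j, ‖x j‖ ≤ ‖x p‖)
    (hqmax : ∀ j ∈ Sᶜ, ‖x j‖ ≤ ‖x q‖) (hxp : 0 < ‖x p‖) :
    (∃ i ∈ S, ‖lam - A i i‖ ≤ rT A S i) ∨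
    (∃ i ∈ S, ∃ j ∈ Sᶜ,
      (‖lam - A i i‖ - rT A S i) * (‖lam - A j j‖ - rT A Sᶜ j) ≤
        rT A Sᶜ i * rT A S j ∧
      ‖lam - A i i‖ ≤ rT A S i + rT A Sᶜ i) := by
  have hrow_p := norm_sub_diag_mul_le_rT heig S p (fun j _ => hpmax j) hqmax
  have hrow_q := norm_sub_diag_mul_le_rT heig Sᶜ q hqmax (fun j _ => hpmax j)
  rw [compl_compl] at hrow_q
  rcases le_or_sub_mul_sub_le_mul_and_le_add (rT_nonneg A Sᶜ p) (rT_nonneg A S q) (hpmax q) hxp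
    hrow_p hrow_q with h | ⟨hprod, hle⟩
  exacts [Or.inl ⟨p, hp, h⟩, Or.inr ⟨p, hp, q, hq, hprod, hle⟩]

end RowBounds

theorem stmt_4_general {n : ℕ} (A : Matrix (Fin n) (Fin n) ℂ)
    (S : Finset (Fin n)) (hS : S.Nonempty) (hSc : Sᶜ.Nonempty)
    (lam : ℂ) (x : Fin n → ℂ) (hx : x ≠ 0) (heig : A.mulVec x = lam • x) :
    (∃ i ∈ S, ‖lam - A i i‖ ≤ rT A S i) ∨
    (∃ i ∈ S, ∃ j ∈ Sᶜ,
      (‖lam - A i i‖ - rT A S i) * (‖lam - A j j‖ - rT A Sᶜ j) ≤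
        rT A Sᶜ i * rT A S j ∧
      ‖lam - A i i‖ ≤ rT A S i + rT A Sᶜ i) ∨
    (∃ i ∈ Sᶜ, ‖lam - A i i‖ ≤ rT A Sᶜ i) ∨
    (∃ i ∈ Sᶜ, ∃ j ∈ S,
      (‖lam - A i i‖ - rT A Sᶜ i) * (‖lam - A j j‖ - rT A S j) ≤
        rT A S i * rT A Sᶜ j ∧
      ‖lam - A i i‖ ≤ rT A S i + rT A Sᶜ i) := by
  obtain ⟨k, hk⟩ := Function.ne_iff.mp hx
  have : Nonempty (Fin n) := ⟨k⟩
  obtain ⟨p, hpmax⟩ := Finite.exists_max fun j => ‖x j‖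
  have hxp : 0 < ‖x p‖ := (norm_pos_iff.mpr hk).trans_le (hpmax k)
  by_cases hpS : p ∈ S
  · obtain ⟨q, hq, hqmax⟩ := Sᶜ.exists_max_image (fun j => ‖x j‖) hSc
    rcases brauer_S_type_of_maximal_coords heig S hpS hq hpmax hqmax hxp with h | h
    exacts [Or.inl h, Or.inr (Or.inl h)]
  · obtain ⟨q, hq, hqmax⟩ := S.exists_max_image (fun j => ‖x j‖) hS
    have h := brauer_S_type_of_maximal_coords heig Sᶜ (mem_compl.mpr hpS) (by rwa [compl_compl]) hpmax
      (by rwa [compl_compl]) hxp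
    rw [compl_compl] at h
    rcases h with h | ⟨i, hi, j, hj, hprod, hle⟩
    exacts [Or.inr (Or.inr (Or.inl h)),
      Or.inr (Or.inr (Or.inr ⟨i, hi, j, hj, hprod, hle.trans_eq (add_comm _ _)⟩))]

theorem stmt_4 {n : ℕ} (hn : 2 ≤ n) (A : Matrix (Fin n) (Fin n) ℂ)
    (S : Finset (Fin n)) (hS : S.Nonempty) (hSc : Sᶜ.Nonempty)
    (lam : ℂ) (x : Fin n → ℂ) (hx : x ≠ 0) (heig : A.mulVec x = lam • x) :
    (∃ i ∈ S, ‖lam - A i i‖ ≤ rT A S i) ∨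
    (∃ i ∈ S, ∃ j ∈ Sᶜ,
      (‖lam - A i i‖ - rT A S i) * (‖lam - A j j‖ - rT A Sᶜ j) ≤
        rT A Sᶜ i * rT A S j ∧
      ‖lam - A i i‖ ≤ rT A S i + rT A Sᶜ i) ∨
    (∃ i ∈ Sᶜ, ‖lam - A i i‖ ≤ rT A Sᶜ i) ∨
    (∃ i ∈ Sᶜ, ∃ j ∈ S,
      (‖lam - A i i‖ - rT A Sᶜ i) * (‖lam - A j j‖ - rT A S j) ≤
        rT A S i * rT A Sᶜ j ∧
      ‖lam - A i i‖ ≤ rT A S i + rT A Sᶜ i) :=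
  stmt_4_general A S hS hSc lam x hx heig
end

section
/- Let λ be an eigenvalue of an n×n complex matrix A with eigenvector x, let S be a nonempty proper subset of indices, and let p ∈ S attain the maximum of |x_i| over i ∈ S and q ∈ S̄ attain the maximum over i ∈ S̄. If |x_p| ≥ |x_q|, then (|λ - A p p| - r_p^S(A)) |x_p| ≤ r_p^{S̄}(A) |x_q|, where r_p^T(A) = ∑_{j ∈ T, j ≠ p} |A p j|. -/
/-! Row `p` of the eigen-equation gives `(λ - A p p) x p = ∑_{j ≠ p} A p j x j`. Splitting the
right-hand side over `S` and `Sᶜ` and bounding `|x j|` by its maximum `|x p|` on `S` and `|x q|`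
on `Sᶜ` gives the estimate. -/

open Finset

section
variable {ι : Type*} [Fintype ι] [DecidableEq ι]

theorem Matrix.sub_diag_mul_eq_sum_erase {R : Type*} [CommRing R] {A : Matrix ι ι R} {lam : R}
    {x : ι → R} (h : A.mulVec x = lam • x) (p : ι) :
    (lam - A p p) * x p = ∑ j ∈ univ.erase p, A p j * x j := by
  have hrow : ∑ j, A p j * x j = lam * x p := congrFun h p
  rw [sub_mul, ← hrow, ← add_sum_erase _ _ (mem_univ p), add_sub_cancel_left]

theorem Finset.sum_univ_erase_eq_add_compl {M : Type*} [AddCommMonoid M] (S : Finset ι) (p : ι)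
    (f : ι → M) :
    ∑ j ∈ univ.erase p, f j = ∑ j ∈ S.erase p, f j + ∑ j ∈ Sᶜ.erase p, f j := by
  rw [← sum_union (disjoint_compl_right.mono (erase_subset ..) (erase_subset ..)),
    ← erase_union_distrib, union_compl]

end

theorem norm_sum_mul_le_of_norm_le {ι R : Type*} [NormedRing R] (s : Finset ι) (a x : ι → R)
    {M : ℝ} (hx : ∀ j ∈ s, ‖x j‖ ≤ M) :
    ‖∑ j ∈ s, a j * x j‖ ≤ (∑ j ∈ s, ‖a j‖) * M := by
  rw [sum_mul]
  refine (norm_sum_le _ _).trans (sum_le_sum fun j hj => ?_)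
  exact (norm_mul_le _ _).trans (mul_le_mul_of_nonneg_left (hx j hj) (norm_nonneg _))

theorem Matrix.norm_sub_diag_mul_le {ι 𝕜 : Type*} [Fintype ι] [DecidableEq ι] [NormedField 𝕜]
    {A : Matrix ι ι 𝕜} {lam : 𝕜} {x : ι → 𝕜} (h : A.mulVec x = lam • x) (S : Finset ι) (p : ι)
    {M N : ℝ} (hM : ∀ j ∈ S, ‖x j‖ ≤ M) (hN : ∀ j ∈ Sᶜ, ‖x j‖ ≤ N) :
    ‖lam - A p p‖ * ‖x p‖ ≤
      (∑ j ∈ S.erase p, ‖A p j‖) * M + (∑ j ∈ Sᶜ.erase p, ‖A p j‖) * N := by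
  rw [← norm_mul, sub_diag_mul_eq_sum_erase h, sum_univ_erase_eq_add_compl S]
  refine (norm_add_le _ _).trans (add_le_add ?_ ?_)
  · exact norm_sum_mul_le_of_norm_le _ _ _ fun j hj => hM j (mem_of_mem_erase hj)
  · exact norm_sum_mul_le_of_norm_le _ _ _ fun j hj => hN j (mem_of_mem_erase hj)

theorem stmt_5_general {n : ℕ} (A : Matrix (Fin n) (Fin n) ℂ)
    (S : Finset (Fin n))
    (lam : ℂ) (x : Fin n → ℂ) (heig : A.mulVec x = lam • x)
    (p q : Fin n)
    (hpmax : ∀ i ∈ S, ‖x i‖ ≤ ‖x p‖)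
    (hqmax : ∀ i ∈ Sᶜ, ‖x i‖ ≤ ‖x q‖) :
    (‖lam - A p p‖ - rT A S p) * ‖x p‖ ≤
      rT A Sᶜ p * ‖x q‖ := by
  rw [sub_mul, sub_le_iff_le_add']
  exact A.norm_sub_diag_mul_le heig S p hpmax hqmax

theorem stmt_5 {n : ℕ} (A : Matrix (Fin n) (Fin n) ℂ)
    (S : Finset (Fin n)) (hS : S.Nonempty) (hSc : Sᶜ.Nonempty)
    (lam : ℂ) (x : Fin n → ℂ) (hx : x ≠ 0) (heig : A.mulVec x = lam • x)
    (p q : Fin n) (hp : p ∈ S) (hq : q ∈ Sᶜ)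
    (hpmax : ∀ i ∈ S, ‖x i‖ ≤ ‖x p‖)
    (hqmax : ∀ i ∈ Sᶜ, ‖x i‖ ≤ ‖x q‖)
    (hpq : ‖x q‖ ≤ ‖x p‖) :
    (‖lam - A p p‖ - rT A S p) * ‖x p‖ ≤
      rT A Sᶜ p * ‖x q‖ :=
  stmt_5_general A S lam x heig p q hpmax hqmax
end
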